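/- arXiv:2010.13328 — 2 statements merged into one kernel-verified Lean document; each statement's English description precedes it below -/
import Mathlib

section
/- For any relational signature σ and k > 0, the Ehrenfeucht–Fraïssé construction E_k is a comonad on the category of σ-structures: given a σ-structure A, define E_k A with universe the nonempty sequences over A of length ≤ k, counit ε_A sending a sequence to its last element, relations lifted so that R^{E_k A}(s_1,…,s_n) holds iff the s_i are pairwise comparable in the prefix order and R^A(ε s_1,…,ε s_n), and coextension f* sending [a_1,…,a_j] to [b_1,…,b_j] where b_i = f[a_1,…,a_i]. Then the comonad laws hold: ε is the counit, coextension is functorial, and the co-Kleisli identities (f*·η = f analogues) are satisfied. -/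
/-!
The `i`-th entry of `f* s` is `f` applied to the prefix of `s` of length `i + 1`, so
coextension commutes with taking prefixes. The counit laws, the
preservation of prefix-comparability (hence of the lifted relations) and the
associativity law `(g ∘ f*)* = g* ∘ f*` all follow by comparing entries.
-/

/-- A relational signature: a set of relation symbols with arities. -/
structure Signature where
  symbols : Type
  arity : symbols → ℕ

/-- A relational structure for a signature `σ`. -/
structure Struct (σ : Signature) where
  carrier : Type
  rel : ∀ r : σ.symbols, (Fin (σ.arity r) → carrier) → Prop

/-- Homomorphisms of relational structures. -/
def IsHom {σ : Signature} (A B : Struct σ) (f : A.carrier → B.carrier) : Prop :=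
  ∀ r x, A.rel r x → B.rel r (fun i => f (x i))

/-- Nonempty sequences of length at most `k`. -/
def NESeq (A : Type) (k : ℕ) : Type := { l : List A // l ≠ [] ∧ l.length ≤ k }

/-- The last element of a nonempty sequence (the counit of the EF comonad). -/
def lastOf {A : Type} {k : ℕ} (s : NESeq A k) : A := s.1.getLast s.2.1

/-- Co-Kleisli coextension for the EF comonad: `f*[a₁,…,a_j] = [f[a₁],…,f[a₁,…,a_j]]`. -/
def coext {A B : Type} {k : ℕ} (f : NESeq A k → B) (s : NESeq A k) : NESeq B k :=
  ⟨(List.finRange s.1.length).map fun i =>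
      f ⟨s.1.take (i.1 + 1), by
        have h1 := i.2
        have h2 := s.2.2
        constructor
        · apply List.ne_nil_of_length_pos
          simp [List.length_take]
          try omega
        · simp [List.length_take]; omega⟩, by
    have h1 := s.2.1
    have h2 := s.2.2
    constructor
    · apply List.ne_nil_of_length_pos
      simpa [List.length_pos_iff] using h1
    · simpa using h2⟩

/-- The Ehrenfeucht–Fraïssé comonad on structures: the universe of `EF k A` consists of
nonempty sequences of length ≤ k over `A`, and a relation holds of a tuple of sequences
iff they are pairwise prefix-comparable and the relation holds in `A` of their last
elements. -/
def EF {σ : Signature} (k : ℕ) (A : Struct σ) : Struct σ where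
  carrier := NESeq A.carrier k
  rel r x := (∀ i j, (x i).1 <+: (x j).1 ∨ (x j).1 <+: (x i).1) ∧
    A.rel r (fun i => lastOf (x i))

/-- The Gaifman graph of a structure. -/
def gaifman {σ : Signature} (A : Struct σ) (a a' : A.carrier) : Prop :=
  a ≠ a' ∧ ∃ (r : σ.symbols) (x : Fin (σ.arity r) → A.carrier) (i j : Fin (σ.arity r)),
    A.rel r x ∧ x i = a ∧ x j = a' ∧ i ≠ j

/-- `α : A → E_k A` is a coalgebra for the EF comonad: it is a homomorphism satisfying
the counit and comultiplication laws. -/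
def IsEFCoalg {σ : Signature} (k : ℕ) (A : Struct σ) (α : A.carrier → NESeq A.carrier k) : Prop :=
  IsHom A (EF k A) α ∧
  (∀ a, lastOf (α a) = a) ∧
  (∀ (a : A.carrier) (i : ℕ) (h : i < (α a).1.length),
      (α ((α a).1.get ⟨i, h⟩)).1 = (α a).1.take (i + 1))

/-- A forest cover of height ≤ k of a graph `(V, adj)`: a forest order in which the
predecessors of any element form a chain of size ≤ k, and adjacent vertices are
comparable. -/
structure ForestCover (V : Type) (adj : V → V → Prop) (k : ℕ) where
  le : V → V → Prop
  le_refl : ∀ a, le a a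
  le_antisymm : ∀ a b, le a b → le b a → a = b
  le_trans : ∀ a b c, le a b → le b c → le a c
  pred_chain : ∀ a b c, le b a → le c a → le b c ∨ le c b
  pred_finite : ∀ a, {b | le b a}.Finite
  height : ∀ a, {b | le b a}.ncard ≤ k
  cover : ∀ a b, adj a b → le a b ∨ le b a

namespace NESeq

variable {A B C : Type} {k : ℕ}

def take (s : NESeq A k) (n : ℕ) (hn : 0 < n) : NESeq A k :=
  ⟨s.1.take n, by simpa [List.take_eq_nil_iff, Nat.pos_iff_ne_zero.mp hn] using s.2.1,
    (List.length_take_le' n s.1).trans s.2.2⟩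

@[simp]
lemma take_val (s : NESeq A k) (n : ℕ) (hn : 0 < n) : (s.take n hn).1 = s.1.take n := rfl

lemma take_length (s : NESeq A k) (hn : 0 < s.1.length) : s.take s.1.length hn = s :=
  Subtype.ext (List.take_length)

lemma lastOf_take (s : NESeq A k) (i : ℕ) (hi : i < s.1.length) :
    lastOf (s.take (i + 1) i.succ_pos) = s.1[i] := by
  simp [lastOf, List.getLast_eq_getElem, List.getElem_take, Nat.min_eq_left hi]

lemma eq_take_of_prefix {s t : NESeq A k} (h : s.1 <+: t.1) :
    s = t.take s.1.length (List.length_pos_iff.mpr s.2.1) :=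
  Subtype.ext (List.prefix_iff_eq_take.mp h)

end NESeq

section Coext

variable {A B C : Type} {k : ℕ}

@[simp]
lemma length_coext (f : NESeq A k → B) (s : NESeq A k) :
    (coext f s).1.length = s.1.length := by
  simp [coext]

lemma getElem_coext (f : NESeq A k → B) (s : NESeq A k) (i : ℕ)
    (hi : i < (coext f s).1.length) :
    (coext f s).1[i] = f (s.take (i + 1) i.succ_pos) := by
  simp [coext, NESeq.take]

lemma take_coext (f : NESeq A k → B) (s : NESeq A k) (n : ℕ) (hn : 0 < n) :
    (coext f s).1.take n = (coext f (s.take n hn)).1 := by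
  refine List.ext_getElem (by simp) fun i hi _ => ?_
  have hin : i + 1 ≤ n := by simp at hi; omega
  rw [List.getElem_take, getElem_coext, getElem_coext]
  congr 1
  exact Subtype.ext (by simp [List.take_take, Nat.min_eq_left hin])

lemma coext_take (f : NESeq A k → B) (s : NESeq A k) (n : ℕ) (hn : 0 < n) :
    coext f (s.take n hn) = (coext f s).take n hn :=
  Subtype.ext (take_coext f s n hn).symm

lemma lastOf_coext (f : NESeq A k → B) (s : NESeq A k) : lastOf (coext f s) = f s := by
  have hs : 0 < s.1.length := List.length_pos_iff.mpr s.2.1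
  rw [lastOf, List.getLast_eq_getElem, getElem_coext]
  congr 1
  convert s.take_length hs using 2
  simp only [length_coext]
  omega

lemma coext_lastOf (s : NESeq A k) : coext lastOf s = s :=
  Subtype.ext <| List.ext_getElem (length_coext _ s) fun i _ hi => by
    rw [getElem_coext, s.lastOf_take i hi]

lemma coext_prefix (f : NESeq A k → B) {s t : NESeq A k} (h : s.1 <+: t.1) :
    (coext f s).1 <+: (coext f t).1 := by
  rw [NESeq.eq_take_of_prefix h, ← take_coext]
  exact List.take_prefix _ _

lemma coext_comp (f : NESeq A k → B) (g : NESeq B k → C) (s : NESeq A k) :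
    coext (fun t => g (coext f t)) s = coext g (coext f s) :=
  Subtype.ext <| List.ext_getElem (by simp) fun i _ _ => by
    rw [getElem_coext, getElem_coext, coext_take]

end Coext

section Hom

variable {σ : Signature} {k : ℕ}

lemma isHom_lastOf (A : Struct σ) : IsHom (EF k A) A lastOf :=
  fun _ _ hx => hx.2

lemma IsHom.coext {A B : Struct σ} {f : NESeq A.carrier k → B.carrier}
    (hf : IsHom (EF k A) B f) : IsHom (EF k A) (EF k B) (coext f) := by
  intro r x hx
  refine ⟨fun i j => (hx.1 i j).imp (coext_prefix f) (coext_prefix f), ?_⟩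
  convert hf r x hx using 2 with i
  exact lastOf_coext f (x i)

end Hom

theorem EF_is_comonad_general (σ : Signature) (k : ℕ) :
    (∀ A : Struct σ, IsHom (EF k A) A lastOf) ∧
    (∀ (A B : Struct σ) (f : NESeq A.carrier k → B.carrier),
        IsHom (EF k A) B f → IsHom (EF k A) (EF k B) (coext f)) ∧
    (∀ (A : Struct σ), coext (lastOf : NESeq A.carrier k → A.carrier) = id) ∧
    (∀ (A B : Struct σ) (f : NESeq A.carrier k → B.carrier) (s : NESeq A.carrier k),
        lastOf (coext f s) = f s) ∧
    (∀ (A B C : Struct σ) (f : NESeq A.carrier k → B.carrier)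
        (g : NESeq B.carrier k → C.carrier),
        coext (fun s => g (coext f s)) = fun s => coext g (coext f s)) :=
  ⟨isHom_lastOf, fun _ _ _ hf => hf.coext, fun _ => funext coext_lastOf,
    fun _ _ => lastOf_coext, fun _ _ _ f g => funext (coext_comp f g)⟩

/-- For any relational signature and `k > 0`, the EF construction `E_k`,
with counit `lastOf` and coextension `coext`, is a comonad (in co-Kleisli form) on the
category of σ-structures: the counit is a homomorphism `E_k A → A`, coextension sends
homomorphisms `E_k A → B` to homomorphisms `E_k A → E_k B`, and the co-Kleisli comonad
laws `ε* = id`, `ε ∘ f* = f`, `(g ∘ f*)* = g* ∘ f*` hold. -/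
theorem EF_is_comonad (σ : Signature) (k : ℕ) (hk : 0 < k) :
    (∀ A : Struct σ, IsHom (EF k A) A lastOf) ∧
    (∀ (A B : Struct σ) (f : NESeq A.carrier k → B.carrier),
        IsHom (EF k A) B f → IsHom (EF k A) (EF k B) (coext f)) ∧
    (∀ (A : Struct σ), coext (lastOf : NESeq A.carrier k → A.carrier) = id) ∧
    (∀ (A B : Struct σ) (f : NESeq A.carrier k → B.carrier) (s : NESeq A.carrier k),
        lastOf (coext f s) = f s) ∧
    (∀ (A B C : Struct σ) (f : NESeq A.carrier k → B.carrier)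
        (g : NESeq B.carrier k → C.carrier),
        coext (fun s => g (coext f s)) = fun s => coext g (coext f s)) :=
  EF_is_comonad_general σ k
end

section
/- Let A be a finite σ-structure and k > 0. There is a bijective correspondence between P_k-coalgebras α : A → P_k A and k-pebble forest covers of the Gaifman graph of A. -/
/-- The universe of the pebbling comonad: finite nonempty sequences of moves
`(pebble index, element)`. -/
def Peb (A : Type) (k : ℕ) : Type := { l : List (Fin k × A) // l ≠ [] }

/-- Last element of a pebbling play. -/
def lastP {A : Type} {k : ℕ} (s : Peb A k) : Fin k × A := s.1.getLast s.2

/-- The pebbling compatibility condition on a pair of plays: they are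
prefix-comparable, and the pebble index of the last move of the shorter one does not
reappear in the suffix extending it to the longer one. -/
def pebCond {A : Type} {k : ℕ} (s t : List (Fin k × A)) : Prop :=
  (s <+: t ∧ ∀ m ∈ t.drop s.length, s.getLast?.map Prod.fst ≠ some m.1) ∨
  (t <+: s ∧ ∀ m ∈ s.drop t.length, t.getLast?.map Prod.fst ≠ some m.1)

/-- The pebbling comonad on structures: `P_k A` has universe the finite nonempty
sequences over `{1,…,k} × A`; a relation holds of a tuple of plays iff they are
pairwise prefix-comparable satisfying the pebbling condition, and the relation holds in
`A` of their last elements. -/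
def PebStruct {σ : Signature} (k : ℕ) (A : Struct σ) : Struct σ where
  carrier := Peb A.carrier k
  rel r x := (∀ i j, pebCond (x i).1 (x j).1) ∧ A.rel r (fun i => (lastP (x i)).2)

/-- Co-Kleisli coextension for the pebbling comonad. -/
def coextP {A B : Type} {k : ℕ} (f : Peb A k → B) (s : Peb A k) : Peb B k :=
  ⟨(List.finRange s.1.length).map fun i =>
      ((s.1.get i).1, f ⟨s.1.take (i.1 + 1), by
        have := i.2
        apply List.ne_nil_of_length_pos
        simp only [List.length_take]
        omega⟩), by
    apply List.ne_nil_of_length_pos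
    have := s.2
    simp only [List.length_map, List.length_finRange]
    exact List.length_pos_iff.mpr this⟩

/-- `α : A → P_k A` is a coalgebra for the pebbling comonad. -/
def IsPebCoalg {σ : Signature} (k : ℕ) (A : Struct σ) (α : A.carrier → Peb A.carrier k) : Prop :=
  IsHom A (PebStruct k A) α ∧
  (∀ a, (lastP (α a)).2 = a) ∧
  (∀ (a : A.carrier) (i : ℕ) (h : i < (α a).1.length),
      (α ((α a).1.get ⟨i, h⟩).2).1 = (α a).1.take (i + 1))

/-- A `k`-pebble forest cover of a graph `(V, adj)`: a forest cover together with a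
pebbling function `p : V → {1,…,k}` such that if `v ⌢ v'` with `v ≤ v'` then
`p v ≠ p w` for all `w` with `v < w ≤ v'`. -/
structure PebbleForestCover (V : Type) (adj : V → V → Prop) (k : ℕ) where
  le : V → V → Prop
  le_refl : ∀ a, le a a
  le_antisymm : ∀ a b, le a b → le b a → a = b
  le_trans : ∀ a b c, le a b → le b c → le a c
  pred_chain : ∀ a b c, le b a → le c a → le b c ∨ le c b
  pred_finite : ∀ a, {b | le b a}.Finite
  cover : ∀ a b, adj a b → le a b ∨ le b a
  p : V → Fin k
  pebble : ∀ v v' w, adj v v' → le v v' → le v w → v ≠ w → le w v' → p v ≠ p w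

/-- A tree decomposition of width ≤ w of a graph `(V, adj)`: a tree `(T, ≤)` with a
labelling `λ : T → P(V)` such that every vertex occurs in some label, every edge is
contained in some label, the set of nodes containing a given vertex is path-closed, and
every label has at most `w + 1` elements. -/
structure TreeDecomp (V : Type) (adj : V → V → Prop) (w : ℕ) where
  T : Type
  le : T → T → Prop
  le_refl : ∀ a, le a a
  le_antisymm : ∀ a b, le a b → le b a → a = b
  le_trans : ∀ a b c, le a b → le b c → le a c
  pred_chain : ∀ a b c, le b a → le c a → le b c ∨ le c b
  pred_finite : ∀ a, {b | le b a}.Finite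
  root : T
  root_le : ∀ x, le root x
  label : T → Set V
  td1 : ∀ v, ∃ x, v ∈ label x
  td2 : ∀ v v', adj v v' → ∃ x, v ∈ label x ∧ v' ∈ label x
  td3 : ∀ (v : V) (x y z : T), v ∈ label x → v ∈ label y →
      (le z x ∨ le z y) → (∀ u, le u x → le u y → le u z) → v ∈ label z
  label_finite : ∀ x, (label x).Finite
  width : ∀ x, (label x).ncard ≤ w + 1

/-!
A coalgebra `α` is the same thing as a forest order on `A` together with a pebbling: put
`a ≤ b` when `α a` is a prefix of `α b`, and let `p a` be the pebble of the last move of `α a`.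
The counit and comultiplication laws say precisely that `α a` lists the predecessors of `a`
in increasing order, each paired with its pebble; conversely, listing the predecessors of `a`
in a forest cover, pebbled by `p`, gives a coalgebra. Under this correspondence the pebbling
condition that the homomorphism law imposes on related elements is exactly the pebble
condition of the cover along Gaifman edges.
-/

theorem IsChain.exists_sortedLT_mem_iff {α : Type*} [PartialOrder α] {s : Set α}
    (hc : IsChain (· ≤ ·) s) (hs : s.Finite) : ∃ l : List α, l.SortedLT ∧ ∀ x, x ∈ l ↔ x ∈ s := by
  classical
  let := hc.linearOrder
  have := hs.fintype
  refine ⟨(Finset.univ.sort : List s).map Subtype.val, ?_, fun x => ?_⟩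
  · rw [List.sortedLT_iff_pairwise, List.pairwise_map]
    exact (List.sortedLT_iff_pairwise.1 (Finset.sortedLT_sort _)).imp id
  · simp

namespace List

variable {α : Type*} [PartialOrder α] {l l' : List α} {a b c : α}

theorem SortedLT.getElem_le_getElem_iff' (hl : l.SortedLT) {i j : ℕ} {hi : i < l.length}
    {hj : j < l.length} : l[i] ≤ l[j] ↔ i ≤ j :=
  hl.strictMono_get.le_iff_le (a := ⟨i, hi⟩) (b := ⟨j, hj⟩)

theorem SortedLT.le_total_of_mem (hl : l.SortedLT) (ha : a ∈ l) (hb : b ∈ l) :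
    a ≤ b ∨ b ≤ a := by
  obtain ⟨i, hi, rfl⟩ := mem_iff_getElem.1 ha
  obtain ⟨j, hj, rfl⟩ := mem_iff_getElem.1 hb
  simp only [hl.getElem_le_getElem_iff']
  omega

/-- `l` lists `Set.Iic a` in increasing order; in a forest this is the path from the root
to `a`. -/
def IsPathTo (l : List α) (a : α) : Prop := l.SortedLT ∧ ∀ b, b ∈ l ↔ b ≤ a

namespace IsPathTo

theorem eq (h : l.IsPathTo a) (h' : l'.IsPathTo a) : l = l' :=
  h.1.eq_of_mem_iff h'.1 fun b => (h.2 b).trans (h'.2 b).symm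

theorem mem (h : l.IsPathTo a) : a ∈ l := (h.2 a).2 le_rfl

theorem ne_nil (h : l.IsPathTo a) : l ≠ [] := ne_nil_of_mem h.mem

theorem getLast_eq (h : l.IsPathTo a) : l.getLast h.ne_nil = a := by
  refine le_antisymm ((h.2 _).1 (getLast_mem _)) ?_
  obtain ⟨i, hi, hia⟩ := mem_iff_getElem.1 h.mem
  calc a = l[i] := hia.symm
    _ ≤ l[l.length - 1] := h.1.getElem_le_getElem_iff'.2 (by omega)
    _ = l.getLast h.ne_nil := (getLast_eq_getElem _).symm

theorem getLast?_eq (h : l.IsPathTo a) : l.getLast? = some a := by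
  rw [getLast?_eq_some_getLast h.ne_nil, h.getLast_eq]

theorem take_succ (h : l.IsPathTo a) {i : ℕ} (hi : i < l.length) :
    (l.take (i + 1)).IsPathTo l[i] := by
  refine ⟨sortedLT_iff_pairwise.2 (sortedLT_iff_pairwise.1 h.1).take, fun b => ?_⟩
  rw [mem_take_iff_getElem]
  constructor
  · rintro ⟨j, hj, rfl⟩
    exact h.1.getElem_le_getElem_iff'.2 (by omega)
  · intro hb
    obtain ⟨j, hj, rfl⟩ := mem_iff_getElem.1 ((h.2 b).2 (hb.trans ((h.2 _).1 (getElem_mem hi))))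
    exact ⟨j, by rw [h.1.getElem_le_getElem_iff'] at hb; omega, rfl⟩

theorem prefix_iff (h : l.IsPathTo a) (h' : l'.IsPathTo b) : l <+: l' ↔ a ≤ b := by
  refine ⟨fun hp => (h'.2 a).1 (hp.mem h.mem), fun hab => ?_⟩
  obtain ⟨i, hi, rfl⟩ := mem_iff_getElem.1 ((h'.2 a).2 hab)
  rw [h.eq (h'.take_succ hi)]
  exact take_prefix _ _

theorem mem_drop_iff (h : l.IsPathTo a) (h' : l'.IsPathTo b) (hab : a ≤ b) :
    c ∈ l'.drop l.length ↔ a < c ∧ c ≤ b := by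
  have hl : l = l'.take l.length := prefix_iff_eq_take.1 ((h.prefix_iff h').2 hab)
  have hmem : c ∈ l' ↔ c ∈ l ∨ c ∈ l'.drop l.length := by
    conv_lhs => rw [← take_append_drop l.length l', ← hl]
    exact mem_append
  constructor
  · intro hc
    have hcl : c ∉ l := fun hcl =>
      disjoint_take_drop h'.1.nodup le_rfl (hl ▸ hcl) hc
    have hcb := (h'.2 c).1 (mem_of_mem_drop hc)
    rw [h.2] at hcl
    refine ⟨lt_of_le_not_ge ?_ hcl, hcb⟩
    exact (h'.1.le_total_of_mem ((h'.2 a).2 hab) (mem_of_mem_drop hc)).resolve_right hcl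
  · rintro ⟨hac, hcb⟩
    exact ((h'.2 c).2 hcb |> hmem.1).resolve_left fun hcl => hac.not_ge ((h.2 c).1 hcl)

end IsPathTo

end List

section Pebbled

variable {V : Type} {k : ℕ} (p : V → Fin k)

def pebbled (l : List V) : List (Fin k × V) := l.map fun b => (p b, b)

theorem pebbled_prefix_pebbled_iff {l l' : List V} : pebbled p l <+: pebbled p l' ↔ l <+: l' :=
  List.prefix_map_iff_of_injective fun _ _ h => congrArg Prod.snd h

variable [PartialOrder V] {l l' : List V} {v v' : V}

theorem forall_mem_drop_pebbled_iff (h : l.IsPathTo v) (h' : l'.IsPathTo v') (hvv' : v ≤ v') :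
    (∀ m ∈ (pebbled p l').drop (pebbled p l).length,
        (pebbled p l).getLast?.map Prod.fst ≠ some m.1) ↔
      ∀ w, v < w → w ≤ v' → p v ≠ p w := by
  simp only [pebbled, List.length_map, ← List.map_drop, List.mem_map, h.mem_drop_iff h' hvv',
    List.getLast?_map, h.getLast?_eq, Option.map_some, ne_eq, Option.some.injEq,
    forall_exists_index, and_imp, Prod.forall, Prod.mk.injEq]
  exact ⟨fun H w hvw hwv' => H _ _ _ hvw hwv' rfl rfl,
    fun H _ _ w hvw hwv' hw _ => hw ▸ H w hvw hwv'⟩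

theorem pebCond_pebbled_iff (h : l.IsPathTo v) (h' : l'.IsPathTo v') (hvv' : v ≤ v') :
    pebCond (pebbled p l) (pebbled p l') ↔ ∀ w, v < w → w ≤ v' → p v ≠ p w := by
  have hdrop := forall_mem_drop_pebbled_iff p h h' hvv'
  refine ⟨fun hc => hc.elim (fun hc => hdrop.1 hc.2) fun ⟨hpre, _⟩ => ?_,
    fun hc => Or.inl ⟨?_, hdrop.2 hc⟩⟩
  · have hv'v : v' ≤ v := (h'.prefix_iff h).1 ((pebbled_prefix_pebbled_iff p).1 hpre)
    exact fun w hvw hwv' => absurd (hvw.trans_le (hwv'.trans hv'v)) (lt_irrefl v)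
  · exact (pebbled_prefix_pebbled_iff p).2 ((h.prefix_iff h').2 hvv')

end Pebbled

theorem pebCond_refl {A : Type} {k : ℕ} (s : List (Fin k × A)) : pebCond s s :=
  Or.inl ⟨List.prefix_refl s, by simp⟩

theorem pebCond_comm {A : Type} {k : ℕ} {s t : List (Fin k × A)} : pebCond s t ↔ pebCond t s :=
  or_comm

theorem gaifman_symm {σ : Signature} {A : Struct σ} {a a' : A.carrier} (h : gaifman A a a') :
    gaifman A a' a := by
  obtain ⟨hne, r, x, i, j, hrel, hi, hj, hij⟩ := h
  exact ⟨hne.symm, r, x, j, i, hrel, hj, hi, hij.symm⟩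

instance {σ : Signature} {A : Struct σ} : Std.Symm (gaifman A) := ⟨fun _ _ => gaifman_symm⟩

theorem gaifman_of_rel {σ : Signature} {A : Struct σ} {r : σ.symbols}
    {x : Fin (σ.arity r) → A.carrier} (hrel : A.rel r x) {i j : Fin (σ.arity r)}
    (hx : x i ≠ x j) : gaifman A (x i) (x j) :=
  ⟨hx, r, x, i, j, hrel, rfl, rfl, fun hij => hx (congrArg x hij)⟩

namespace PebbleForestCover

variable {V : Type} {adj : V → V → Prop} {k : ℕ} (C : PebbleForestCover V adj k)

abbrev toPartialOrder : PartialOrder V where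
  le := C.le
  le_refl := C.le_refl
  le_trans := C.le_trans
  le_antisymm := C.le_antisymm

theorem exists_isPathTo (a : V) : letI := C.toPartialOrder; ∃ l : List V, l.IsPathTo a :=
  let := C.toPartialOrder
  IsChain.exists_sortedLT_mem_iff (fun _ hb _ hc _ => C.pred_chain a _ _ hb hc) (C.pred_finite a)

noncomputable def path (a : V) : List V := (C.exists_isPathTo a).choose

theorem isPathTo_path (a : V) : letI := C.toPartialOrder; (C.path a).IsPathTo a :=
  (C.exists_isPathTo a).choose_spec

theorem path_getElem (a : V) {i : ℕ} (hi : i < (C.path a).length) :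
    C.path (C.path a)[i] = (C.path a).take (i + 1) :=
  let := C.toPartialOrder
  (C.isPathTo_path _).eq ((C.isPathTo_path a).take_succ hi)

theorem path_prefix_path_iff {a b : V} : C.path a <+: C.path b ↔ C.le a b :=
  let := C.toPartialOrder
  (C.isPathTo_path a).prefix_iff (C.isPathTo_path b)

noncomputable def play (a : V) : Peb V k :=
  ⟨pebbled C.p (C.path a), by
    let := C.toPartialOrder
    simpa [pebbled] using (C.isPathTo_path a).ne_nil⟩

theorem lastP_play (a : V) : lastP (C.play a) = (C.p a, a) := by
  let := C.toPartialOrder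
  simp [lastP, play, pebbled, List.getLast_map, (C.isPathTo_path a).getLast_eq]

theorem play_prefix_play_iff {a b : V} : (C.play a).1 <+: (C.play b).1 ↔ C.le a b :=
  (pebbled_prefix_pebbled_iff C.p).trans C.path_prefix_path_iff

theorem pebCond_play_iff {v v' : V} (h : C.le v v') :
    pebCond (C.play v).1 (C.play v').1 ↔ ∀ w, C.le v w → v ≠ w → C.le w v' → C.p v ≠ C.p w := by
  let := C.toPartialOrder
  rw [play, play, pebCond_pebbled_iff C.p (C.isPathTo_path v) (C.isPathTo_path v') h]
  exact ⟨fun H w hvw hne hwv' => H w (lt_of_le_of_ne hvw hne) hwv',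
    fun H w hvw hwv' => H w hvw.le hvw.ne hwv'⟩

theorem pebCond_play_of_adj [Std.Symm adj] {v v' : V} (hadj : adj v v') :
    pebCond (C.play v).1 (C.play v').1 := by
  rcases C.cover v v' hadj with h | h
  · exact (C.pebCond_play_iff h).2 (C.pebble v v' · hadj h)
  · exact pebCond_comm.1 ((C.pebCond_play_iff h).2 (C.pebble v' v · (Std.Symm.symm _ _ hadj) h))

theorem play_get_snd (a : V) (i : ℕ) (h : i < (C.play a).1.length) :
    ((C.play a).1.get ⟨i, h⟩).2 = (C.path a)[i]'(by simpa [play, pebbled] using h) := by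
  simp [play, pebbled]

theorem isPebCoalg_play {σ : Signature} {A : Struct σ}
    (C : PebbleForestCover A.carrier (gaifman A) k) : IsPebCoalg k A C.play := by
  refine ⟨fun r x hrel => ⟨fun i j => ?_, ?_⟩, fun a => by rw [lastP_play], fun a i h => ?_⟩
  · by_cases hx : x i = x j
    · simpa only [hx] using pebCond_refl _
    · exact C.pebCond_play_of_adj (gaifman_of_rel hrel hx)
  · simpa only [lastP_play] using hrel
  · rw [C.play_get_snd]
    simp only [play, pebbled, C.path_getElem, List.map_take]

end PebbleForestCover

namespace IsPebCoalg

variable {σ : Signature} {k : ℕ} {A : Struct σ} {α : A.carrier → Peb A.carrier k}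
  (hα : IsPebCoalg k A α)
include hα

theorem injective : Function.Injective fun a => (α a).1 := fun a b h => by
  rw [← hα.2.1 a, ← hα.2.1 b, show α a = α b from Subtype.ext h]

theorem pebCond_of_gaifman {a a' : A.carrier} (h : gaifman A a a') :
    pebCond (α a).1 (α a').1 := by
  obtain ⟨-, r, x, i, j, hrel, rfl, rfl, -⟩ := h
  exact (hα.1 r x hrel).1 i j

theorem apply_getElem_snd (a : A.carrier) {i : ℕ} (h : i < (α a).1.length) :
    (α ((α a).1[i]).2).1 = (α a).1.take (i + 1) :=
  hα.2.2 a i h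

theorem lastP_apply_getElem_snd (a : A.carrier) {i : ℕ} (h : i < (α a).1.length) :
    lastP (α ((α a).1[i]).2) = (α a).1[i] := by
  apply Option.some_injective
  rw [lastP, ← List.getLast?_eq_some_getLast, hα.apply_getElem_snd a h, List.getLast?_take]
  simp [List.getElem?_eq_getElem h]

abbrev toPartialOrder : PartialOrder A.carrier where
  le a b := (α a).1 <+: (α b).1
  le_refl _ := List.prefix_refl _
  le_trans _ _ _ := List.IsPrefix.trans
  le_antisymm _ _ h h' := hα.injective (h.eq_of_length (le_antisymm h.length_le h'.length_le))

theorem isPathTo (a : A.carrier) :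
    letI := hα.toPartialOrder; ((α a).1.map Prod.snd).IsPathTo a := by
  let := hα.toPartialOrder
  refine ⟨List.sortedLT_iff_getElem_lt_getElem_of_lt.2 fun i j hi hj hij => ?_, fun b => ?_⟩
  · have hi' : i < (α a).1.length := by simpa using hi
    have hj' : j < (α a).1.length := by simpa using hj
    simp only [List.getElem_map]
    show (α _).1 <+: (α _).1 ∧ ¬(α _).1 <+: (α _).1
    rw [hα.apply_getElem_snd a hi', hα.apply_getElem_snd a hj']
    refine ⟨List.take_prefix_take_left (by omega), fun hp => ?_⟩
    have := hp.length_le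
    simp only [List.length_take] at this
    omega
  · show b ∈ (α a).1.map Prod.snd ↔ (α b).1 <+: (α a).1
    constructor
    · intro hb
      obtain ⟨i, hi, rfl⟩ := List.mem_iff_getElem.1 hb
      rw [List.getElem_map, hα.apply_getElem_snd a (by simpa using hi)]
      exact List.take_prefix _ _
    · intro hp
      rw [← hα.2.1 b]
      exact List.mem_map_of_mem (hp.mem (List.getLast_mem _))

theorem eq_pebbled (a : A.carrier) :
    (α a).1 = pebbled (fun b => (lastP (α b)).1) ((α a).1.map Prod.snd) := by
  refine List.ext_getElem (by simp [pebbled]) fun i h _ => ?_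
  simp [pebbled, hα.lastP_apply_getElem_snd a h]

theorem finite_setOf_prefix (a : A.carrier) : {b | (α b).1 <+: (α a).1}.Finite :=
  ((α a).1.inits.finite_toSet.preimage hα.injective.injOn).subset
    fun _ hb => (List.mem_inits _ _).2 hb

def toCover : PebbleForestCover A.carrier (gaifman A) k where
  le a b := (α a).1 <+: (α b).1
  le_refl _ := List.prefix_refl _
  le_antisymm _ _ := hα.toPartialOrder.le_antisymm _ _
  le_trans _ _ _ := List.IsPrefix.trans
  pred_chain _ _ _ := List.prefix_or_prefix_of_prefix
  pred_finite := hα.finite_setOf_prefix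
  cover _ _ hadj := (hα.pebCond_of_gaifman hadj).imp And.left And.left
  p a := (lastP (α a)).1
  pebble v v' w hadj hvv' hvw hne hwv' := by
    let := hα.toPartialOrder
    have hpeb := hα.pebCond_of_gaifman hadj
    rw [hα.eq_pebbled v, hα.eq_pebbled v'] at hpeb
    exact (pebCond_pebbled_iff _ (hα.isPathTo v) (hα.isPathTo v') hvv').1 hpeb w
      (lt_of_le_of_ne hvw hne) hwv'

theorem play_toCover : hα.toCover.play = α := by
  funext a
  have hpath : hα.toCover.path a = (α a).1.map Prod.snd :=
    let := hα.toPartialOrder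
    (hα.toCover.isPathTo_path a).eq (hα.isPathTo a)
  exact Subtype.ext ((congrArg _ hpath).trans (hα.eq_pebbled a).symm)

end IsPebCoalg

attribute [ext] PebbleForestCover

theorem PebbleForestCover.toCover_isPebCoalg_play {σ : Signature} {k : ℕ} {A : Struct σ}
    (C : PebbleForestCover A.carrier (gaifman A) k) : C.isPebCoalg_play.toCover = C :=
  PebbleForestCover.ext (funext₂ fun _ _ => propext C.play_prefix_play_iff)
    (funext fun a => congrArg Prod.fst (C.lastP_play a))

theorem pebCoalgebras_equiv_pebbleForestCovers_general
    (σ : Signature) (k : ℕ) (A : Struct σ) :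
    Nonempty ({α : A.carrier → Peb A.carrier k // IsPebCoalg k A α} ≃
              PebbleForestCover A.carrier (gaifman A) k) :=
  ⟨{ toFun := fun α => α.2.toCover
     invFun := fun C => ⟨C.play, C.isPebCoalg_play⟩
     left_inv := fun α => Subtype.ext α.2.play_toCover
     right_inv := PebbleForestCover.toCover_isPebCoalg_play }⟩

/-- For a finite structure `A` and `k > 0`, there is a bijective
correspondence between `P_k`-coalgebras on `A` and `k`-pebble forest covers of the
Gaifman graph of `A`. -/
theorem pebCoalgebras_equiv_pebbleForestCovers
    (σ : Signature) (k : ℕ) (hk : 0 < k) (A : Struct σ) [Fintype A.carrier] :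
    Nonempty ({α : A.carrier → Peb A.carrier k // IsPebCoalg k A α} ≃
              PebbleForestCover A.carrier (gaifman A) k) :=
  pebCoalgebras_equiv_pebbleForestCovers_general σ k A
end
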